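/- Let Ĥ be a full-row-rank p×q real matrix and suppose the noise level δ satisfies δ < σ_min(Ĥ)/(2 l_h), and the perturbation E = Ĥ − H̄ satisfies ‖E‖₂ ≤ l_h·δ. Then ‖H̄†‖₂ ≤ 2·σ_min(Ĥ)⁻¹ and ‖H̄† − Ĥ†‖₂ ≤ 8·l_h·‖Ĥ†‖₂²·δ. -/

import Mathlib

/-- Euclidean (ℓ²) norm of a finite real vector. -/
noncomputable def enormL2 {n : Type*} [Fintype n] (x : n → ℝ) : ℝ :=
  ‖(WithLp.equiv 2 (n → ℝ)).symm x‖

/-- Spectral norm (operator norm induced by the Euclidean norm) of a real matrix. -/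
noncomputable def specNorm {m n : Type*} [Fintype m] [Fintype n] (M : Matrix m n ℝ) : ℝ :=
  ⨆ v : {v : n → ℝ // enormL2 v ≤ 1}, enormL2 (M.mulVec v.1)

/-- Smallest singular value of a real matrix `M`, computed as
`min_{‖v‖ = 1} ‖Mᵀ v‖` (the transpose formulation). -/
noncomputable def sigmaMin {m n : Type*} [Fintype m] [Fintype n] (M : Matrix m n ℝ) : ℝ :=
  ⨅ v : {v : m → ℝ // enormL2 v = 1}, enormL2 (M.transpose.mulVec v.1)

/-- Moore–Penrose pseudoinverse of a full-row-rank matrix: `M† = Mᵀ (M Mᵀ)⁻¹`. -/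
noncomputable def pinvFR {m n : Type*} [Fintype m] [Fintype n] [DecidableEq m]
    (M : Matrix m n ℝ) : Matrix n m ℝ :=
  M.transpose * (M * M.transpose)⁻¹

theorem test : True := trivial

/-!
A lower bound `c‖v‖ ≤ ‖Aᵀv‖` with `c > 0` makes `AAᵀ` invertible and bounds the pseudoinverse
`A† = Aᵀ(AAᵀ)⁻¹` by `c⁻¹`, because `‖A†x‖² = ⟪(AAᵀ)⁻¹x, x⟫`. Such a bound with `c = σ_min(Ĥ)` is
inherited by `H̄ = Ĥ − E` with `c = σ_min(Ĥ) − ‖E‖₂ ≥ σ_min(Ĥ)/2`, which is the first claim. For the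
second, `H̄† − Ĥ† = H̄†EĤ† − (1 − H̄†H̄)Eᵀ Ĥ†ᵀĤ†`, where `1 − H̄†H̄` is an orthogonal projection,
so `‖H̄† − Ĥ†‖₂ ≤ (‖H̄†‖₂ + ‖Ĥ†‖₂)‖E‖₂‖Ĥ†‖₂ ≤ 3‖Ĥ†‖₂²‖E‖₂`, using `σ_min(Ĥ)⁻¹ ≤ ‖Ĥ†‖₂`.
-/

open scoped RealInnerProductSpace Matrix.Norms.L2Operator
open Matrix WithLp

lemma LinearMap.mul_norm_le_norm_apply_of_unit {E F : Type*} [NormedAddCommGroup E]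
    [NormedSpace ℝ E] [NormedAddCommGroup F] [NormedSpace ℝ F] (f : E →ₗ[ℝ] F) {c : ℝ}
    (h : ∀ x, ‖x‖ = 1 → c ≤ ‖f x‖) (x : E) : c * ‖x‖ ≤ ‖f x‖ := by
  rcases eq_or_ne x 0 with rfl | hx
  · simp
  · have hx' : 0 < ‖x‖ := norm_pos_iff.mpr hx
    have hunit := h (‖x‖⁻¹ • x) (by rw [norm_smul, norm_inv, norm_norm, inv_mul_cancel₀ hx'.ne'])
    rwa [map_smul, norm_smul, norm_inv, norm_norm, ← div_eq_inv_mul, le_div_iff₀ hx'] at hunit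

namespace Matrix

lemma toEuclideanLin_mul_apply {m n l : Type*} [Fintype n] [DecidableEq n] [Fintype l]
    [DecidableEq l] (M : Matrix m n ℝ) (N : Matrix n l ℝ) (x : EuclideanSpace ℝ l) :
    toEuclideanLin (M * N) x = toEuclideanLin M (toEuclideanLin N x) := by
  rw [toLpLin_mul_same]; rfl

section

variable {m n : Type*} [Fintype m] [Fintype n] [DecidableEq n]

lemma norm_toEuclideanLin_apply_le (M : Matrix m n ℝ) (x : EuclideanSpace ℝ n) :
    ‖toEuclideanLin M x‖ ≤ ‖M‖ * ‖x‖ :=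
  ((toEuclideanLin ≪≫ₗ LinearMap.toContinuousLinearMap) M).le_opNorm x

lemma l2_opNorm_le_of_unit_norm (M : Matrix m n ℝ) {C : ℝ} (hC : 0 ≤ C)
    (h : ∀ x : EuclideanSpace ℝ n, ‖x‖ = 1 → ‖toEuclideanLin M x‖ ≤ C) : ‖M‖ ≤ C :=
  ContinuousLinearMap.opNorm_le_of_unit_norm hC h

lemma l2_opNorm_le_of_forall (M : Matrix m n ℝ) {C : ℝ} (hC : 0 ≤ C)
    (h : ∀ x : EuclideanSpace ℝ n, ‖toEuclideanLin M x‖ ≤ C * ‖x‖) : ‖M‖ ≤ C :=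
  ContinuousLinearMap.opNorm_le_bound _ hC h

lemma l2_opNorm_transpose [DecidableEq m] (M : Matrix m n ℝ) : ‖Mᵀ‖ = ‖M‖ := by
  rw [← conjTranspose_eq_transpose_of_trivial, l2_opNorm_conjTranspose]

lemma inner_toEuclideanLin_transpose [DecidableEq m] (M : Matrix m n ℝ) (x : EuclideanSpace ℝ m)
    (y : EuclideanSpace ℝ n) : ⟪toEuclideanLin Mᵀ x, y⟫ = ⟪x, toEuclideanLin M y⟫ := by
  rw [← conjTranspose_eq_transpose_of_trivial, toEuclideanLin_conjTranspose_eq_adjoint,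
    LinearMap.adjoint_inner_left]

lemma sub_l2_opNorm_mul_norm_le [DecidableEq m] {A B : Matrix m n ℝ} {c : ℝ}
    (hA : ∀ v, c * ‖v‖ ≤ ‖toEuclideanLin Aᵀ v‖) (v : EuclideanSpace ℝ m) :
    (c - ‖A - B‖) * ‖v‖ ≤ ‖toEuclideanLin Bᵀ v‖ := by
  have hsplit : toEuclideanLin Aᵀ v = toEuclideanLin Bᵀ v + toEuclideanLin (A - B)ᵀ v := by
    rw [transpose_sub, map_sub, LinearMap.sub_apply, add_sub_cancel]
  have hE := norm_toEuclideanLin_apply_le (A - B)ᵀ v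
  rw [l2_opNorm_transpose] at hE
  linarith [hA v, hsplit ▸ norm_add_le (toEuclideanLin Bᵀ v) (toEuclideanLin (A - B)ᵀ v)]

end

section RightInverse

variable {R : Type*} [CommRing R] {m n : Type*} [Fintype m] [Fintype n] [DecidableEq m]

/-- Wedin's decomposition; its third term `B'B'ᵀ(A - B)ᵀ(1 - AA')` vanishes since `AA' = 1`. -/
lemma sub_eq_of_mul_eq_one [DecidableEq n] {A B : Matrix m n R} {A' B' : Matrix n m R}
    (hA : A * A' = 1) (hB : B * B' = 1) (hA' : (A' * A)ᵀ = A' * A) (hB' : (B' * B)ᵀ = B' * B) :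
    B' - A' = B' * (A - B) * A' - (1 - B' * B) * (A - B)ᵀ * (A'ᵀ * A') := by
  have hAA' : Aᵀ * (A'ᵀ * A') = A' := by
    rw [← Matrix.mul_assoc, ← transpose_mul, hA', Matrix.mul_assoc, hA, Matrix.mul_one]
  have hBB' : B' * B * Bᵀ = Bᵀ := by
    rw [← hB', ← transpose_mul, ← Matrix.mul_assoc, hB, Matrix.one_mul]
  calc B' - A' = B' * (A * A') - B' * B * A' - (Aᵀ * (A'ᵀ * A') - Bᵀ * (A'ᵀ * A')
        - (B' * B * (Aᵀ * (A'ᵀ * A')) - B' * B * Bᵀ * (A'ᵀ * A'))) := by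
        rw [hA, hAA', hBB', Matrix.mul_one]; abel
    _ = _ := by
        rw [transpose_sub]
        simp only [Matrix.mul_sub, Matrix.sub_mul, Matrix.mul_assoc, Matrix.one_mul]
        abel

lemma isStarProjection_of_mul_eq_one [StarRing R] [TrivialStar R]
    {B : Matrix m n R} {B' : Matrix n m R}
    (hB : B * B' = 1) (hB' : (B' * B)ᵀ = B' * B) : IsStarProjection (B' * B) where
  isIdempotentElem := by
    rw [IsIdempotentElem, Matrix.mul_assoc, ← Matrix.mul_assoc B, hB, Matrix.one_mul]
  isSelfAdjoint := by
    rw [IsSelfAdjoint, star_eq_conjTranspose, conjTranspose_eq_transpose_of_trivial, hB']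

end RightInverse

lemma l2_opNorm_sub_le_of_mul_eq_one {m n : Type*} [Fintype m] [Fintype n] [DecidableEq m]
    [DecidableEq n] {A B : Matrix m n ℝ} {A' B' : Matrix n m ℝ}
    (hA : A * A' = 1) (hB : B * B' = 1) (hA' : (A' * A)ᵀ = A' * A) (hB' : (B' * B)ᵀ = B' * B) :
    ‖B' - A'‖ ≤ (‖B'‖ + ‖A'‖) * ‖A - B‖ * ‖A'‖ := by
  have hproj : ‖1 - B' * B‖ ≤ 1 := (isStarProjection_of_mul_eq_one hB hB').one_sub.norm_le
  rw [sub_eq_of_mul_eq_one hA hB hA' hB']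
  calc _ ≤ ‖B' * (A - B) * A'‖ + ‖(1 - B' * B) * (A - B)ᵀ * (A'ᵀ * A')‖ := norm_sub_le _ _
    _ ≤ ‖B'‖ * ‖A - B‖ * ‖A'‖ + 1 * ‖A - B‖ * (‖A'‖ * ‖A'‖) := by
        gcongr
        · exact (l2_opNorm_mul _ _).trans (by gcongr; exact l2_opNorm_mul _ _)
        · refine (l2_opNorm_mul _ _).trans ?_
          gcongr
          · refine (l2_opNorm_mul _ _).trans ?_
            rw [l2_opNorm_transpose]
            gcongr
          · exact (l2_opNorm_mul _ _).trans_eq (by rw [l2_opNorm_transpose])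
    _ = _ := by ring

end Matrix

lemma specNorm_eq_l2_opNorm {m n : Type*} [Fintype m] [Fintype n] [DecidableEq n]
    (M : Matrix m n ℝ) : specNorm M = ‖M‖ := by
  have : Nonempty {v : n → ℝ // enormL2 v ≤ 1} := ⟨⟨0, by simp [enormL2]⟩⟩
  have bound (v : {v : n → ℝ // enormL2 v ≤ 1}) : enormL2 (M *ᵥ v.1) ≤ ‖M‖ :=
    (norm_toEuclideanLin_apply_le M (toLp 2 v.1)).trans
      (mul_le_of_le_one_right (norm_nonneg _) v.2)
  refine le_antisymm (ciSup_le bound) <|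
    l2_opNorm_le_of_unit_norm M (Real.iSup_nonneg fun _ => norm_nonneg _) fun x hx => ?_
  exact le_ciSup (f := fun v : {v : n → ℝ // enormL2 v ≤ 1} => enormL2 (M *ᵥ v.1))
    ⟨‖M‖, Set.forall_mem_range.mpr bound⟩ ⟨ofLp x, hx.le⟩

lemma sigmaMin_mul_norm_le {m n : Type*} [Fintype m] [Fintype n] [DecidableEq m]
    (M : Matrix m n ℝ) (v : EuclideanSpace ℝ m) :
    sigmaMin M * ‖v‖ ≤ ‖toEuclideanLin Mᵀ v‖ :=
  (toEuclideanLin Mᵀ).mul_norm_le_norm_apply_of_unit (fun x hx =>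
    ciInf_le (f := fun v : {v : m → ℝ // enormL2 v = 1} => enormL2 (Mᵀ *ᵥ v.1))
      ⟨0, Set.forall_mem_range.mpr fun _ => norm_nonneg _⟩ ⟨ofLp x, hx⟩) v

lemma one_le_sigmaMin_mul_l2_opNorm {m n : Type*} [Fintype m] [Fintype n] [DecidableEq m]
    [DecidableEq n] {A : Matrix m n ℝ} {B : Matrix n m ℝ} (hAB : A * B = 1)
    (hA : 0 < sigmaMin A) : 1 ≤ sigmaMin A * ‖B‖ := by
  have : Nonempty {v : m → ℝ // enormL2 v = 1} := by
    by_contra h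
    rw [not_nonempty_iff] at h
    exact hA.ne' (Real.iInf_of_isEmpty _)
  rw [sigmaMin, Real.iInf_mul_of_nonneg (norm_nonneg B)]
  refine le_ciInf fun v => ?_
  calc (1 : ℝ) = ‖toEuclideanLin (Bᵀ * Aᵀ) (toLp 2 v.1)‖ := by
        rw [← transpose_mul, hAB, transpose_one, toLpLin_one]; exact v.2.symm
    _ ≤ ‖Bᵀ‖ * ‖toEuclideanLin Aᵀ (toLp 2 v.1)‖ := by
        rw [toEuclideanLin_mul_apply]; exact norm_toEuclideanLin_apply_le _ _
    _ = _ := by rw [l2_opNorm_transpose, mul_comm]; rfl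

section Pinv

variable {m n : Type*} [Fintype m] [Fintype n] [DecidableEq m]

lemma mul_pinvFR {A : Matrix m n ℝ} (h : IsUnit (A * Aᵀ).det) : A * pinvFR A = 1 := by
  rw [pinvFR, ← Matrix.mul_assoc, mul_nonsing_inv _ h]

lemma transpose_pinvFR_mul_self (A : Matrix m n ℝ) : (pinvFR A * A)ᵀ = pinvFR A * A := by
  rw [pinvFR, transpose_mul, transpose_mul, transpose_transpose, transpose_nonsing_inv,
    transpose_mul, transpose_transpose, Matrix.mul_assoc]

variable [DecidableEq n] {A : Matrix m n ℝ} {c : ℝ}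

lemma isUnit_det_mul_transpose (hc : 0 < c) (hA : ∀ v, c * ‖v‖ ≤ ‖toEuclideanLin Aᵀ v‖) :
    IsUnit (A * Aᵀ).det := by
  rw [← isUnit_iff_isUnit_det, ← mulVec_injective_iff_isUnit]
  refine (injective_iff_map_eq_zero (toLin' (A * Aᵀ))).mpr fun w hw => ?_
  have hAw : ‖toEuclideanLin Aᵀ (toLp 2 w)‖ ^ 2 = 0 := by
    rw [← real_inner_self_eq_norm_sq, inner_toEuclideanLin_transpose,
      ← toEuclideanLin_mul_apply, toLpLin_toLp, hw, toLp_zero, inner_zero_right]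
  have hcw := hA (toLp 2 w)
  rw [pow_eq_zero_iff two_ne_zero |>.mp hAw] at hcw
  simpa using nonpos_of_mul_nonpos_right hcw hc

lemma l2_opNorm_pinvFR_le (hc : 0 < c) (hA : ∀ v, c * ‖v‖ ≤ ‖toEuclideanLin Aᵀ v‖) :
    ‖pinvFR A‖ ≤ c⁻¹ := by
  refine l2_opNorm_le_of_forall _ (inv_nonneg.mpr hc.le) fun x => ?_
  set y := toEuclideanLin (A * Aᵀ)⁻¹ x
  set z := toEuclideanLin (pinvFR A) x
  have hz : z = toEuclideanLin Aᵀ y := toEuclideanLin_mul_apply _ _ _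
  have hAz : toEuclideanLin A z = x := by
    rw [← toEuclideanLin_mul_apply, mul_pinvFR (isUnit_det_mul_transpose hc hA), toLpLin_one]
    rfl
  have hsq : c * ‖z‖ * ‖z‖ ≤ ‖x‖ * ‖z‖ := calc
    c * ‖z‖ * ‖z‖ = c * ⟪y, x⟫ := by
      rw [mul_assoc, ← real_inner_self_eq_norm_mul_norm]
      nth_rewrite 1 [hz]
      rw [inner_toEuclideanLin_transpose, hAz]
    _ ≤ c * (‖y‖ * ‖x‖) := by gcongr; exact real_inner_le_norm y x
    _ = c * ‖y‖ * ‖x‖ := by ring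
    _ ≤ ‖z‖ * ‖x‖ := by rw [hz]; gcongr; exact hA y
    _ = ‖x‖ * ‖z‖ := mul_comm _ _
  have hcz : c * ‖z‖ ≤ ‖x‖ := by
    rcases (norm_nonneg z).eq_or_lt with hz0 | hz0
    · rw [← hz0, mul_zero]; exact norm_nonneg x
    · exact le_of_mul_le_mul_right hsq hz0
  rwa [inv_mul_eq_div, le_div_iff₀' hc]

end Pinv

theorem pinv_bounds_small_noise_general {p q : ℕ}
    (Hhat Hbar : Matrix (Fin p) (Fin q) ℝ)
    (δ lh : ℝ) (hlh : 0 < lh) (hδ : δ < sigmaMin Hhat / (2 * lh))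
    (hE : specNorm (Hhat - Hbar) ≤ lh * δ) :
    specNorm (pinvFR Hbar) ≤ 2 * (sigmaMin Hhat)⁻¹ ∧
      specNorm (pinvFR Hbar - pinvFR Hhat) ≤
        8 * lh * specNorm (pinvFR Hhat) ^ 2 * δ := by
  set σ := sigmaMin Hhat
  simp only [specNorm_eq_l2_opNorm] at hE ⊢
  have hlhδ : 0 ≤ lh * δ := (norm_nonneg _).trans hE
  have hσ : 2 * (lh * δ) < σ := by rw [lt_div_iff₀ (by positivity)] at hδ; linarith
  have hσpos : 0 < σ := by linarith
  have hHhat := sigmaMin_mul_norm_le Hhat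
  have hHbar (v : EuclideanSpace ℝ (Fin p)) : σ / 2 * ‖v‖ ≤ ‖toEuclideanLin Hbarᵀ v‖ :=
    le_trans (by gcongr; linarith) (sub_l2_opNorm_mul_norm_le (B := Hbar) hHhat v)
  have hpinvBar : ‖pinvFR Hbar‖ ≤ 2 * σ⁻¹ := by
    simpa [div_eq_mul_inv, mul_comm] using l2_opNorm_pinvFR_le (half_pos hσpos) hHbar
  have hHhat_inv := mul_pinvFR (isUnit_det_mul_transpose hσpos hHhat)
  have hσpinv : σ⁻¹ ≤ ‖pinvFR Hhat‖ := by
    rw [inv_le_iff_one_le_mul₀' hσpos]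
    exact one_le_sigmaMin_mul_l2_opNorm hHhat_inv hσpos
  refine ⟨hpinvBar, ?_⟩
  calc ‖pinvFR Hbar - pinvFR Hhat‖
      ≤ (‖pinvFR Hbar‖ + ‖pinvFR Hhat‖) * ‖Hhat - Hbar‖ * ‖pinvFR Hhat‖ :=
        l2_opNorm_sub_le_of_mul_eq_one hHhat_inv
          (mul_pinvFR (isUnit_det_mul_transpose (half_pos hσpos) hHbar))
          (transpose_pinvFR_mul_self _) (transpose_pinvFR_mul_self _)
    _ ≤ (2 * ‖pinvFR Hhat‖ + ‖pinvFR Hhat‖) * (lh * δ) * ‖pinvFR Hhat‖ := by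
        gcongr; linarith
    _ ≤ 8 * lh * ‖pinvFR Hhat‖ ^ 2 * δ := by
        nlinarith [mul_nonneg hlhδ (sq_nonneg ‖pinvFR Hhat‖)]

/-- Under the small-noise condition `δ < σ_min(Ĥ)/(2 l_h)` with
`‖Ĥ − H̄‖₂ ≤ l_h δ`, the pseudoinverse of the noiseless matrix satisfies
`‖H̄†‖₂ ≤ 2 σ_min(Ĥ)⁻¹` and `‖H̄† − Ĥ†‖₂ ≤ 8 l_h ‖Ĥ†‖₂² δ`. -/
theorem pinv_bounds_small_noise {p q : ℕ}
    (Hhat Hbar : Matrix (Fin p) (Fin q) ℝ) (hH : Hhat.rank = p)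
    (δ lh : ℝ) (hlh : 0 < lh) (hδ : δ < sigmaMin Hhat / (2 * lh))
    (hE : specNorm (Hhat - Hbar) ≤ lh * δ) :
    specNorm (pinvFR Hbar) ≤ 2 * (sigmaMin Hhat)⁻¹ ∧
      specNorm (pinvFR Hbar - pinvFR Hhat) ≤
        8 * lh * specNorm (pinvFR Hhat) ^ 2 * δ :=
  pinv_bounds_small_noise_general Hhat Hbar δ lh hlh hδ hE
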